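/- Let E be the ellipse {x ∈ ℝ^d : x_1² + (x_2/b)² = R², x_i = 0 for i ≥ 3} with 0 < b ≤ 1 and R > r > 0. Then the Lebesgue measure of the pseudo-ring PR_r^E = {x : (√(x_1² + (x_2/b)²) − R)² + Σ_{i=3}^d x_i² ≤ r²} equals 2π R b ω_{d−1} r^{d−1}, where ω_{d−1} is the volume of the unit ball in ℝ^{d−1}. -/

import Mathlib

open MeasureTheory Real Set


noncomputable def Bvol (m : ℕ) (s : ℝ) : ENNReal :=
  volume {w : Fin m → ℝ | ∑ j, w j ^ 2 ≤ s}

lemma Bvol_mono (m : ℕ) : Monotone (Bvol m) := fun s t hst =>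
  measure_mono fun w hw => le_trans hw hst

lemma Bvol_measurable (m : ℕ) : Measurable (Bvol m) := (Bvol_mono m).measurable

lemma Bvol_of_neg {m : ℕ} {s : ℝ} (hs : s < 0) : Bvol m s = 0 := by
  have h : {w : Fin m → ℝ | ∑ j, w j ^ 2 ≤ s} = ∅ := by
    ext w
    simp only [mem_setOf_eq, mem_empty_iff_false, iff_false, not_le]
    exact lt_of_lt_of_le hs (Finset.sum_nonneg fun j _ => sq_nonneg _)
  rw [Bvol, h, measure_empty]

lemma Bvol_ne_zero {m : ℕ} {s : ℝ} (h : Bvol m s ≠ 0) : 0 ≤ s := by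
  by_contra hs; exact h (Bvol_of_neg (not_le.1 hs))

lemma measurableSet_sumSq (m : ℕ) (s : ℝ) :
    MeasurableSet {w : Fin m → ℝ | ∑ j, w j ^ 2 ≤ s} :=
  measurableSet_le (by fun_prop) measurable_const

lemma Bvol_succ (m : ℕ) (s : ℝ) :
    Bvol (m + 1) s = ∫⁻ t : ℝ, Bvol m (s - t ^ 2) := by
  have hA : MeasurableSet {p : ℝ × (Fin m → ℝ) | p.1 ^ 2 + ∑ j, p.2 j ^ 2 ≤ s} :=
    measurableSet_le (by fun_prop) measurable_const
  have h1 : {w : Fin (m + 1) → ℝ | ∑ j, w j ^ 2 ≤ s}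
      = (MeasurableEquiv.piFinSuccAbove (fun _ : Fin (m + 1) => ℝ) 0) ⁻¹'
        {p : ℝ × (Fin m → ℝ) | p.1 ^ 2 + ∑ j, p.2 j ^ 2 ≤ s} := by
    ext w
    simp only [Set.mem_preimage, Set.mem_setOf_eq, MeasurableEquiv.piFinSuccAbove, Fin.sum_univ_succ]
    rfl
  rw [Bvol, h1,
    (MeasureTheory.volume_preserving_piFinSuccAbove (fun _ : Fin (m + 1) => ℝ) 0).measure_preimage
      hA.nullMeasurableSet,
    Measure.volume_eq_prod, Measure.prod_apply hA]
  refine lintegral_congr fun t => ?_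
  have h2 : Prod.mk t ⁻¹' {p : ℝ × (Fin m → ℝ) | p.1 ^ 2 + ∑ j, p.2 j ^ 2 ≤ s}
      = {w : Fin m → ℝ | ∑ j, w j ^ 2 ≤ s - t ^ 2} := by
    ext w
    simp only [Set.mem_preimage, Set.mem_setOf_eq]
    constructor <;> intro h <;> linarith
  rw [h2]; rfl

lemma Bvol_eq_ball (n : ℕ) (ρ : ℝ) (hρ : 0 ≤ ρ) :
    Bvol n (ρ ^ 2) = ENNReal.ofReal (ρ ^ n) *
      volume (Metric.ball (0 : EuclideanSpace ℝ (Fin n)) 1) := by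
  have h : Bvol n (ρ ^ 2) = volume (Metric.closedBall (0 : EuclideanSpace ℝ (Fin n)) ρ) := by
    rw [Bvol, ← ((EuclideanSpace.volume_preserving_symm_measurableEquiv_toLp (Fin n)).symm
      _).measure_preimage Metric.isClosed_closedBall.measurableSet.nullMeasurableSet]
    congr 1
    ext w
    simp only [Set.mem_preimage, Metric.mem_closedBall, dist_zero_right, Set.mem_setOf_eq]
    rw [EuclideanSpace.norm_eq]
    rw [Real.sqrt_le_left hρ]
    simp only [Real.norm_eq_abs, sq_abs]
    rfl
  rw [h, Measure.addHaar_closedBall _ _ hρ, finrank_euclideanSpace_fin]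

lemma lintegral_polar (f : ℝ × ℝ → ENNReal) :
    ∫⁻ p : ℝ × ℝ, f p
      = ∫⁻ p in polarCoord.target, ENNReal.ofReal p.1 * f (polarCoord.symm p) := by
  set B : ℝ × ℝ → ℝ × ℝ →L[ℝ] ℝ × ℝ := fun p =>
    LinearMap.toContinuousLinearMap (Matrix.toLin (Module.Basis.finTwoProd ℝ) (Module.Basis.finTwoProd ℝ)
      !![cos p.2, -p.1 * sin p.2; sin p.2, p.1 * cos p.2]) with hB
  have B_det : ∀ p : ℝ × ℝ, (B p).det = p.1 := by
    intro p
    conv_rhs => rw [← one_mul p.1, ← cos_sq_add_sin_sq p.2]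
    simp only [hB, neg_mul, LinearMap.det_toContinuousLinearMap, LinearMap.det_toLin,
      Matrix.det_fin_two_of, sub_neg_eq_add]
    ring
  have A : ∫⁻ p : ℝ × ℝ, f p = ∫⁻ p in polarCoord.source, f p := by
    rw [← setLIntegral_univ]
    exact (setLIntegral_congr polarCoord_source_ae_eq_univ).symm
  rw [A, ← polarCoord.symm_image_target_eq_source,
    lintegral_image_eq_lintegral_abs_det_fderiv_mul volume
      polarCoord.open_target.measurableSet
      (fun p _ => (hasFDerivAt_polarCoord_symm p).hasFDerivWithinAt)
      polarCoord.symm.injOn f]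
  refine setLIntegral_congr_fun polarCoord.open_target.measurableSet
    (fun p hp => ?_)
  rw [show (fderivPolarCoordSymm p).det = p.1 from B_det p]
  congr 1
  rw [abs_of_pos]
  rw [polarCoord_target] at hp
  exact hp.1

lemma key_sym (m : ℕ) {R r : ℝ} (hr : 0 < r) (hrR : r < R) :
    ∫⁻ t : ℝ, ENNReal.ofReal (t + R) * Bvol m (r ^ 2 - t ^ 2)
      = ENNReal.ofReal R * Bvol (m + 1) (r ^ 2) := by
  have hmh : Measurable fun t : ℝ => Bvol m (r ^ 2 - t ^ 2) :=
    (Bvol_measurable m).comp (by fun_prop)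
  have hm1 : Measurable fun t : ℝ => ENNReal.ofReal (t + R) * Bvol m (r ^ 2 - t ^ 2) :=
    (ENNReal.measurable_ofReal.comp (by fun_prop)).mul hmh
  have hm2 : Measurable fun t : ℝ => ENNReal.ofReal (R - t) * Bvol m (r ^ 2 - t ^ 2) :=
    (ENNReal.measurable_ofReal.comp (by fun_prop)).mul hmh
  set I := ∫⁻ t : ℝ, ENNReal.ofReal (t + R) * Bvol m (r ^ 2 - t ^ 2) with hI
  have hneg : I = ∫⁻ t : ℝ, ENNReal.ofReal (R - t) * Bvol m (r ^ 2 - t ^ 2) := by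
    rw [hI, ← (Measure.measurePreserving_neg (volume : Measure ℝ)).lintegral_comp hm1]
    refine lintegral_congr fun t => ?_
    simp only [neg_sq]
    rw [neg_add_eq_sub]
  have hdouble : (2 : ENNReal) * I
      = 2 * (ENNReal.ofReal R * ∫⁻ t : ℝ, Bvol m (r ^ 2 - t ^ 2)) := by
    calc (2 : ENNReal) * I = I + I := two_mul I
    _ = ∫⁻ t : ℝ, (ENNReal.ofReal (t + R) * Bvol m (r ^ 2 - t ^ 2)
          + ENNReal.ofReal (R - t) * Bvol m (r ^ 2 - t ^ 2)) := by
        nth_rewrite 2 [hneg]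
        rw [hI, ← lintegral_add_left hm1]
    _ = ∫⁻ t : ℝ, (2 * ENNReal.ofReal R) * Bvol m (r ^ 2 - t ^ 2) := by
        refine lintegral_congr fun t => ?_
        by_cases ht : Bvol m (r ^ 2 - t ^ 2) = 0
        · simp [ht]
        · have h1 : 0 ≤ r ^ 2 - t ^ 2 := Bvol_ne_zero ht
          have h2 : 0 ≤ t + R := by nlinarith [sq_nonneg (t + r)]
          have h3 : 0 ≤ R - t := by nlinarith [sq_nonneg (t - r)]
          rw [← add_mul, ← ENNReal.ofReal_add h2 h3]
          have h4 : t + R + (R - t) = 2 * R := by ring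
          rw [h4, ENNReal.ofReal_mul (by norm_num), ENNReal.ofReal_ofNat]
    _ = 2 * (ENNReal.ofReal R * ∫⁻ t : ℝ, Bvol m (r ^ 2 - t ^ 2)) := by
        rw [lintegral_const_mul' _ _ (by finiteness), mul_assoc]
  rw [(ENNReal.mul_right_inj (by norm_num) (by norm_num)).mp hdouble, Bvol_succ]

theorem stmt_5 (d : ℕ) (hd : 2 ≤ d) (b R r : ℝ)
    (hb0 : 0 < b) (hb1 : b ≤ 1) (hr : 0 < r) (hrR : r < R)
    (PR : Set (EuclideanSpace ℝ (Fin d)))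
    (hPR : PR = {x |
      (Real.sqrt (x ⟨0, by omega⟩ ^ 2 + (x ⟨1, by omega⟩ / b) ^ 2) - R) ^ 2
        + ∑ i ∈ Finset.univ.filter (fun i : Fin d => 2 ≤ (i : ℕ)), x i ^ 2 ≤ r ^ 2}) :
    volume PR = ENNReal.ofReal (2 * Real.pi * R * b * r ^ (d - 1)) *
      volume (Metric.ball (0 : EuclideanSpace ℝ (Fin (d - 1))) 1) := by
  obtain ⟨m, rfl⟩ : ∃ m, d = m + 2 := ⟨d - 2, by omega⟩
  subst hPR
  have hR0 : 0 < R := hr.trans hrR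
  simp only [show m + 2 - 1 = m + 1 from rfl]
  set ω := volume (Metric.ball (0 : EuclideanSpace ℝ (Fin (m + 1))) 1) with hω
  have hsum : ∀ x : Fin (m + 2) → ℝ,
      (∑ i ∈ Finset.univ.filter (fun i : Fin (m + 2) => 2 ≤ (i : ℕ)), x i ^ 2)
        = ∑ j : Fin m, x j.succ.succ ^ 2 := by
    intro x
    rw [Finset.sum_filter, Fin.sum_univ_succ, Fin.sum_univ_succ]
    simp
  -- Step 1: Euclidean space to pi space
  have hS : MeasurableSet {x : Fin (m + 2) → ℝ |
      (Real.sqrt (x 0 ^ 2 + (x 1 / b) ^ 2) - R) ^ 2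
        + ∑ j : Fin m, x j.succ.succ ^ 2 ≤ r ^ 2} :=
    measurableSet_le (by fun_prop) measurable_const
  have step1 : volume {x : EuclideanSpace ℝ (Fin (m + 2)) |
      (Real.sqrt (x ⟨0, by omega⟩ ^ 2 + (x ⟨1, by omega⟩ / b) ^ 2) - R) ^ 2
        + ∑ i ∈ Finset.univ.filter (fun i : Fin (m + 2) => 2 ≤ (i : ℕ)), x i ^ 2 ≤ r ^ 2}
      = volume {x : Fin (m + 2) → ℝ |
      (Real.sqrt (x 0 ^ 2 + (x 1 / b) ^ 2) - R) ^ 2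
        + ∑ j : Fin m, x j.succ.succ ^ 2 ≤ r ^ 2} := by
    rw [← (EuclideanSpace.volume_preserving_symm_measurableEquiv_toLp
      (Fin (m + 2))).measure_preimage hS.nullMeasurableSet]
    congr 1
    ext x
    simp only [Set.mem_setOf_eq, Set.mem_preimage, Fin.mk_zero, Fin.mk_one]
    rw [hsum x]
    rfl
  -- Step 2: split off first coordinate
  have hS1 : MeasurableSet {p : ℝ × (Fin (m + 1) → ℝ) |
      (Real.sqrt (p.1 ^ 2 + (p.2 0 / b) ^ 2) - R) ^ 2
        + ∑ j : Fin m, p.2 j.succ ^ 2 ≤ r ^ 2} :=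
    measurableSet_le (by fun_prop) measurable_const
  have step2 : volume {x : Fin (m + 2) → ℝ |
      (Real.sqrt (x 0 ^ 2 + (x 1 / b) ^ 2) - R) ^ 2
        + ∑ j : Fin m, x j.succ.succ ^ 2 ≤ r ^ 2}
      = volume {p : ℝ × (Fin (m + 1) → ℝ) |
      (Real.sqrt (p.1 ^ 2 + (p.2 0 / b) ^ 2) - R) ^ 2
        + ∑ j : Fin m, p.2 j.succ ^ 2 ≤ r ^ 2} := by
    rw [← (MeasureTheory.volume_preserving_piFinSuccAbove (fun _ : Fin (m + 2) => ℝ)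
      0).measure_preimage hS1.nullMeasurableSet]
    congr 1
  -- Step 3: Fubini twice
  have step3 : volume {p : ℝ × (Fin (m + 1) → ℝ) |
      (Real.sqrt (p.1 ^ 2 + (p.2 0 / b) ^ 2) - R) ^ 2
        + ∑ j : Fin m, p.2 j.succ ^ 2 ≤ r ^ 2}
      = ∫⁻ a : ℝ, ∫⁻ c : ℝ,
          Bvol m (r ^ 2 - (Real.sqrt (a ^ 2 + (c / b) ^ 2) - R) ^ 2) := by
    rw [Measure.volume_eq_prod, Measure.prod_apply hS1]
    refine lintegral_congr fun a => ?_
    have hS2 : MeasurableSet {q : ℝ × (Fin m → ℝ) |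
        (Real.sqrt (a ^ 2 + (q.1 / b) ^ 2) - R) ^ 2 + ∑ j, q.2 j ^ 2 ≤ r ^ 2} :=
      measurableSet_le (by fun_prop) measurable_const
    have h1 : (Prod.mk a ⁻¹' {p : ℝ × (Fin (m + 1) → ℝ) |
        (Real.sqrt (p.1 ^ 2 + (p.2 0 / b) ^ 2) - R) ^ 2
          + ∑ j : Fin m, p.2 j.succ ^ 2 ≤ r ^ 2})
        = (MeasurableEquiv.piFinSuccAbove (fun _ : Fin (m + 1) => ℝ) 0) ⁻¹'
          {q : ℝ × (Fin m → ℝ) |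
        (Real.sqrt (a ^ 2 + (q.1 / b) ^ 2) - R) ^ 2 + ∑ j, q.2 j ^ 2 ≤ r ^ 2} := by
      ext z
      simp only [Set.mem_setOf_eq, Set.mem_preimage, MeasurableEquiv.piFinSuccAbove]
      rfl
    rw [h1, (MeasureTheory.volume_preserving_piFinSuccAbove (fun _ : Fin (m + 1) => ℝ)
      0).measure_preimage hS2.nullMeasurableSet,
      Measure.volume_eq_prod, Measure.prod_apply hS2]
    refine lintegral_congr fun c => ?_
    have h2 : (Prod.mk c ⁻¹' {q : ℝ × (Fin m → ℝ) |
        (Real.sqrt (a ^ 2 + (q.1 / b) ^ 2) - R) ^ 2 + ∑ j, q.2 j ^ 2 ≤ r ^ 2})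
        = {w : Fin m → ℝ | ∑ j, w j ^ 2
            ≤ r ^ 2 - (Real.sqrt (a ^ 2 + (c / b) ^ 2) - R) ^ 2} := by
      ext w
      simp only [Set.mem_setOf_eq, Set.mem_preimage]
      constructor <;> intro h <;> linarith
    rw [h2]
    rfl
  -- Step 4: scaling in c
  have hfm : Measurable fun p : ℝ × ℝ =>
      Bvol m (r ^ 2 - (Real.sqrt (p.1 ^ 2 + p.2 ^ 2) - R) ^ 2) :=
    (Bvol_measurable m).comp (by fun_prop)
  have step4 : ∀ a : ℝ, ∫⁻ c : ℝ, Bvol m (r ^ 2 - (Real.sqrt (a ^ 2 + (c / b) ^ 2) - R) ^ 2)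
      = ENNReal.ofReal b * ∫⁻ c : ℝ, Bvol m (r ^ 2 - (Real.sqrt (a ^ 2 + c ^ 2) - R) ^ 2) := by
    intro a
    have hf : Measurable fun c : ℝ => Bvol m (r ^ 2 - (Real.sqrt (a ^ 2 + c ^ 2) - R) ^ 2) :=
      (Bvol_measurable m).comp (by fun_prop)
    calc ∫⁻ c : ℝ, Bvol m (r ^ 2 - (Real.sqrt (a ^ 2 + (c / b) ^ 2) - R) ^ 2)
        = ∫⁻ c : ℝ, (fun y : ℝ => Bvol m (r ^ 2 - (Real.sqrt (a ^ 2 + y ^ 2) - R) ^ 2))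
            (b⁻¹ * c) := by
          refine lintegral_congr fun c => ?_
          rw [div_eq_inv_mul]
      _ = ∫⁻ y : ℝ, Bvol m (r ^ 2 - (Real.sqrt (a ^ 2 + y ^ 2) - R) ^ 2)
            ∂(Measure.map (fun c : ℝ => b⁻¹ * c) volume) :=
          (lintegral_map hf (measurable_const_mul _)).symm
      _ = ENNReal.ofReal b * ∫⁻ c : ℝ, Bvol m (r ^ 2 - (Real.sqrt (a ^ 2 + c ^ 2) - R) ^ 2) := by
          rw [Real.map_volume_mul_left (inv_ne_zero hb0.ne'), lintegral_smul_measure]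
          congr 1
          rw [inv_inv, abs_of_pos hb0]
  -- Step 5: to a product integral
  have step5 : ∫⁻ a : ℝ, ∫⁻ c : ℝ, Bvol m (r ^ 2 - (Real.sqrt (a ^ 2 + c ^ 2) - R) ^ 2)
      = ∫⁻ p : ℝ × ℝ, Bvol m (r ^ 2 - (Real.sqrt (p.1 ^ 2 + p.2 ^ 2) - R) ^ 2) := by
    rw [Measure.volume_eq_prod, lintegral_prod _ hfm.aemeasurable]
  -- Step 6: polar coordinates
  have hCm : Measurable fun p : ℝ × ℝ =>
      ENNReal.ofReal p.1 * Bvol m (r ^ 2 - (p.1 - R) ^ 2) :=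
    (ENNReal.measurable_ofReal.comp measurable_fst).mul
      ((Bvol_measurable m).comp
        (by fun_prop : Measurable fun p : ℝ × ℝ => r ^ 2 - (p.1 - R) ^ 2))
  have step6 : ∫⁻ p : ℝ × ℝ, Bvol m (r ^ 2 - (Real.sqrt (p.1 ^ 2 + p.2 ^ 2) - R) ^ 2)
      = ENNReal.ofReal (2 * π) * (ENNReal.ofReal R * Bvol (m + 1) (r ^ 2)) := by
    rw [lintegral_polar]
    have hint : ∀ p : ℝ × ℝ, p ∈ polarCoord.target →
        ENNReal.ofReal p.1 * Bvol m (r ^ 2 -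
          (Real.sqrt ((polarCoord.symm p).1 ^ 2 + (polarCoord.symm p).2 ^ 2) - R) ^ 2)
          = ENNReal.ofReal p.1 * Bvol m (r ^ 2 - (p.1 - R) ^ 2) := by
      intro p hp
      rw [polarCoord_target] at hp
      have hp1 : 0 < p.1 := hp.1
      rw [polarCoord_symm_apply]
      have h1 : (p.1 * cos p.2) ^ 2 + (p.1 * sin p.2) ^ 2 = p.1 ^ 2 := by
        have := sin_sq_add_cos_sq p.2
        nlinarith [this]
      rw [h1, Real.sqrt_sq hp1.le]
    rw [setLIntegral_congr_fun polarCoord.open_target.measurableSet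
      hint]
    rw [polarCoord_target, Measure.volume_eq_prod, ← Measure.prod_restrict,
      lintegral_prod _ hCm.aemeasurable]
    simp only [setLIntegral_const]
    rw [Real.volume_Ioo]
    have h2pi : ENNReal.ofReal (π - -π) = ENNReal.ofReal (2 * π) := by
      congr 1; ring
    rw [h2pi, lintegral_mul_const' _ _ (by finiteness)]
    have hext : ∫⁻ ρ in Ioi (0 : ℝ), ENNReal.ofReal ρ * Bvol m (r ^ 2 - (ρ - R) ^ 2)
        = ∫⁻ ρ : ℝ, ENNReal.ofReal ρ * Bvol m (r ^ 2 - (ρ - R) ^ 2) := by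
      rw [← lintegral_indicator measurableSet_Ioi]
      refine lintegral_congr fun ρ => ?_
      by_cases hρ : ρ ∈ Ioi (0 : ℝ)
      · rw [indicator_of_mem hρ]
      · rw [indicator_of_notMem hρ]
        have h0 : ENNReal.ofReal ρ = 0 := ENNReal.ofReal_eq_zero.2 (by simpa using hρ)
        simp [h0]
    rw [hext]
    have hshift : ∫⁻ ρ : ℝ, ENNReal.ofReal ρ * Bvol m (r ^ 2 - (ρ - R) ^ 2)
        = ∫⁻ t : ℝ, ENNReal.ofReal (t + R) * Bvol m (r ^ 2 - t ^ 2) := by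
      rw [← lintegral_add_right_eq_self
        (fun ρ => ENNReal.ofReal ρ * Bvol m (r ^ 2 - (ρ - R) ^ 2)) R]
      refine lintegral_congr fun t => ?_
      rw [add_sub_cancel_right]
    rw [hshift, key_sym m hr hrR, mul_comm]
  -- Assemble
  rw [step1, step2, step3]
  calc ∫⁻ a : ℝ, ∫⁻ c : ℝ, Bvol m (r ^ 2 - (Real.sqrt (a ^ 2 + (c / b) ^ 2) - R) ^ 2)
      = ∫⁻ a : ℝ, ENNReal.ofReal b *
          ∫⁻ c : ℝ, Bvol m (r ^ 2 - (Real.sqrt (a ^ 2 + c ^ 2) - R) ^ 2) :=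
        lintegral_congr step4
    _ = ENNReal.ofReal b * ∫⁻ a : ℝ, ∫⁻ c : ℝ,
          Bvol m (r ^ 2 - (Real.sqrt (a ^ 2 + c ^ 2) - R) ^ 2) :=
        lintegral_const_mul' _ _ (by finiteness)
    _ = ENNReal.ofReal b * (ENNReal.ofReal (2 * π) * (ENNReal.ofReal R * Bvol (m + 1) (r ^ 2))) := by
        rw [step5, step6]
    _ = ENNReal.ofReal (2 * Real.pi * R * b * r ^ (m + 1)) * ω := by
        rw [Bvol_eq_ball (m + 1) r hr.le, ← hω]
        have e1 : ENNReal.ofReal (2 * Real.pi * R * b * r ^ (m + 1))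
            = ENNReal.ofReal b * (ENNReal.ofReal (2 * π)
              * (ENNReal.ofReal R * ENNReal.ofReal (r ^ (m + 1)))) := by
          rw [show 2 * Real.pi * R * b * r ^ (m + 1)
              = b * (2 * π * (R * r ^ (m + 1))) from by ring,
            ENNReal.ofReal_mul hb0.le,
            ENNReal.ofReal_mul (by positivity : (0:ℝ) ≤ 2 * π),
            ENNReal.ofReal_mul hR0.le]
        rw [e1]
        ring
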